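/- In the braid group B₂(Σ₁,₀) presented as G = ⟨a, b, c ∣ a²b = ba², b²a = ab², a²c = ca², b²c = cb², a²b² = c²⟩, every element g can be written uniquely as g = c^{-2j}·ι(m) where j ∈ ℤ, m is an element of the positive monoid M with the same presentation not left-divisible by c², and ι : M → G is the canonical map. -/

import Mathlib

/-- Relations of the presentation `⟨a,b,c ∣ a²b=ba², b²a=ab², a²c=ca², b²c=cb², a²b²=c²⟩`
of the braid group `B₂(Σ_{1,0})`, as elements of the free group on `a = 0`, `b = 1`, `c = 2`. -/
def grels : Set (FreeGroup (Fin 3)) :=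
  { FreeGroup.of 0 ^ 2 * FreeGroup.of 1 * (FreeGroup.of 1 * FreeGroup.of 0 ^ 2)⁻¹,
    FreeGroup.of 1 ^ 2 * FreeGroup.of 0 * (FreeGroup.of 0 * FreeGroup.of 1 ^ 2)⁻¹,
    FreeGroup.of 0 ^ 2 * FreeGroup.of 2 * (FreeGroup.of 2 * FreeGroup.of 0 ^ 2)⁻¹,
    FreeGroup.of 1 ^ 2 * FreeGroup.of 2 * (FreeGroup.of 2 * FreeGroup.of 1 ^ 2)⁻¹,
    FreeGroup.of 0 ^ 2 * FreeGroup.of 1 ^ 2 * (FreeGroup.of 2 ^ 2)⁻¹ }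

/-- Relations `a² = b² = c² = 1` of the universal Coxeter group `W(a,b,c)`. -/
def wrels : Set (FreeGroup (Fin 3)) :=
  { FreeGroup.of 0 ^ 2, FreeGroup.of 1 ^ 2, FreeGroup.of 2 ^ 2 }

/-- The braid group `B₂(Σ_{1,0})` via the presentation above. -/
abbrev G := PresentedGroup grels

/-- The universal Coxeter group `W(a,b,c) = ℤ/2 * ℤ/2 * ℤ/2`. -/
abbrev W := PresentedGroup wrels

def ga : G := PresentedGroup.of 0
def gb : G := PresentedGroup.of 1
def gc : G := PresentedGroup.of 2
def wa : W := PresentedGroup.of 0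
def wb : W := PresentedGroup.of 1
def wc : W := PresentedGroup.of 2
/-- The defining relations of the positive monoid presentation
`⟨a,b,c ∣ a²b=ba², b²a=ab², a²c=ca², b²c=cb², a²b²=c²⟩⁺`, on the free monoid
on `a = 0`, `b = 1`, `c = 2`. -/
inductive mrels : FreeMonoid (Fin 3) → FreeMonoid (Fin 3) → Prop
  | ab : mrels (.of 0 * .of 0 * .of 1) (.of 1 * (.of 0 * .of 0))
  | ba : mrels (.of 1 * .of 1 * .of 0) (.of 0 * (.of 1 * .of 1))
  | ac : mrels (.of 0 * .of 0 * .of 2) (.of 2 * (.of 0 * .of 0))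
  | bc : mrels (.of 1 * .of 1 * .of 2) (.of 2 * (.of 1 * .of 1))
  | c2 : mrels (.of 0 * .of 0 * (.of 1 * .of 1)) (.of 2 * .of 2)

/-- The positive monoid `B₂⁺(Σ_{1,0})` given by the presentation above. -/
abbrev M := PresentedMonoid mrels

def ma : M := PresentedMonoid.of mrels 0
def mb : M := PresentedMonoid.of mrels 1
def mc : M := PresentedMonoid.of mrels 2

/-!
`G` acts on `ℤ² × W`, with `W = ℤ/2 * ℤ/2 * ℤ/2` encoded by reduced words: a generator `x`
cancels a leading `x`, adding its weight `(1,0)`, `(0,1)` or `(1,1)` to the `ℤ²` part, and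
otherwise prepends `x`. Squares of generators act by commuting translations, so the relations
hold. In `M`, `a²` and `b²` are central, so every element is `(a²)^i (b²)^k w` with `w` reduced;
its orbit point is `((i, k), w)`, so this normal form is unique, and it is divisible by
`c² = a²b²` iff `i, k > 0`. Since `c²` is central, every element of `G` is `c^{2t} ι(m)`; splitting
`(c²)^{min i k}` off `m` gives the form, and the orbit point `((n + i, n + k), w)` of
`c^{2n} ι((a²)^i (b²)^k w)` determines `n` once `min i k = 0`.
-/

/-- Reduced words over `α`, i.e. the elements of the free product of copies of `ℤ/2` indexed
by `α`. -/
abbrev RedWord (α : Type*) := {l : List α // l.IsChain (· ≠ ·)}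

namespace RedWord

variable {α A : Type*} [AddCommGroup A]

open Multiplicative

def shift : Multiplicative A →* Equiv.Perm (A × RedWord α) where
  toFun e := (Equiv.addRight e.toAdd).prodCongr (Equiv.refl _)
  map_one' := by ext <;> simp
  map_mul' e f := by
    ext <;> simp
    abel

lemma shift_pow_apply (e : Multiplicative A) (n : ℕ) (p : A × RedWord α) :
    (shift e ^ n) p = (p.1 + n • e.toAdd, p.2) := by
  rw [← map_pow]
  rfl

variable [DecidableEq α]

def letterFun (d : α → A) (x : α) : A × RedWord α → A × RedWord α
  | (v, ⟨[], _⟩) => (v, ⟨[x], List.isChain_singleton x⟩)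
  | (v, ⟨y :: t, h⟩) =>
    if hyx : y = x then (v + d x, ⟨t, h.tail⟩)
    else (v, ⟨x :: y :: t, List.isChain_cons_cons.2 ⟨Ne.symm hyx, h⟩⟩)

variable (d : α → A) (x : α)

lemma letterFun_add (v e : A) (w : RedWord α) :
    letterFun d x (v + e, w) = ((letterFun d x (v, w)).1 + e, (letterFun d x (v, w)).2) := by
  rcases w with ⟨_ | ⟨y, t⟩, h⟩
  · rfl
  · by_cases hyx : y = x <;> simp [letterFun, hyx, add_right_comm]

lemma letterFun_letterFun (p : A × RedWord α) :
    letterFun d x (letterFun d x p) = (p.1 + d x, p.2) := by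
  rcases p with ⟨v, _ | ⟨y, _ | ⟨z, t⟩⟩, h⟩
  · simp [letterFun]
  · by_cases hyx : y = x
    · subst hyx
      simp [letterFun]
    · simp [letterFun, hyx]
  · by_cases hyx : y = x
    · subst hyx
      have hzy : z ≠ y := (List.isChain_cons_cons.1 h).1.symm
      simp [letterFun, hzy]
    · simp [letterFun, hyx]

def letterPerm : Equiv.Perm (A × RedWord α) where
  toFun := letterFun d x
  invFun p := letterFun d x (p.1 - d x, p.2)
  left_inv p := by simp [sub_eq_add_neg, letterFun_add, letterFun_letterFun]
  right_inv p := by simp [letterFun_letterFun]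

lemma letterPerm_apply_of_isChain_cons (v : A) (w : RedWord α) (h : (x :: w.1).IsChain (· ≠ ·)) :
    letterPerm d x (v, w) = (v, ⟨x :: w.1, h⟩) := by
  rcases w with ⟨_ | ⟨y, t⟩, hw⟩
  · rfl
  · simp [letterPerm, letterFun, (List.isChain_cons_cons.1 h).1.symm]

lemma letterPerm_mul_self : letterPerm d x * letterPerm d x = shift (ofAdd (d x)) := by
  ext p : 1
  exact letterFun_letterFun d x p

lemma commute_shift_letterPerm (e : Multiplicative A) : Commute (shift e) (letterPerm d x) := by
  ext p : 1
  exact (letterFun_add d x p.1 e.toAdd p.2).symm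

end RedWord

theorem PresentedMonoid.commute_of_forall_commute_of {α : Type*}
    {rels : FreeMonoid α → FreeMonoid α → Prop} {z : PresentedMonoid rels}
    (h : ∀ x, Commute z (of rels x)) (m : PresentedMonoid rels) : Commute z m := by
  have hle : Submonoid.closure (Set.range (of rels)) ≤ Submonoid.centralizer {z} :=
    Submonoid.closure_le.2 <| Set.range_subset_iff.2 fun x =>
      Submonoid.mem_centralizer_iff.2 fun _ hg => Set.mem_singleton_iff.1 hg ▸ (h x).eq
  rw [closure_range_of] at hle
  exact Submonoid.mem_centralizer_iff.1 (hle (Submonoid.mem_top m)) z rfl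

namespace Braid

open PresentedMonoid RedWord Multiplicative

lemma ma_sq_mul_mb : ma ^ 2 * mb = mb * ma ^ 2 := by
  rw [sq]
  exact mk_eq_mk_of_rel mrels.ab

lemma mb_sq_mul_ma : mb ^ 2 * ma = ma * mb ^ 2 := by
  rw [sq]
  exact mk_eq_mk_of_rel mrels.ba

lemma ma_sq_mul_mc : ma ^ 2 * mc = mc * ma ^ 2 := by
  rw [sq]
  exact mk_eq_mk_of_rel mrels.ac

lemma mb_sq_mul_mc : mb ^ 2 * mc = mc * mb ^ 2 := by
  rw [sq]
  exact mk_eq_mk_of_rel mrels.bc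

lemma mc_sq : mc ^ 2 = ma ^ 2 * mb ^ 2 := by
  rw [sq, sq, sq]
  exact (mk_eq_mk_of_rel mrels.c2).symm

lemma commute_ma_sq (m : M) : Commute (ma ^ 2) m := by
  refine commute_of_forall_commute_of (fun x => ?_) m
  fin_cases x
  exacts [(Commute.refl ma).pow_left 2, ma_sq_mul_mb, ma_sq_mul_mc]

lemma commute_mb_sq (m : M) : Commute (mb ^ 2) m := by
  refine commute_of_forall_commute_of (fun x => ?_) m
  fin_cases x
  exacts [mb_sq_mul_ma, (Commute.refl mb).pow_left 2, mb_sq_mul_mc]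

lemma commute_mc_sq (m : M) : Commute (mc ^ 2) m := by
  rw [mc_sq]
  exact (commute_ma_sq m).mul_left (commute_mb_sq m)

lemma exists_of_mul_eq_mc_sq (x : Fin 3) : ∃ m, of mrels x * m = mc ^ 2 := by
  fin_cases x
  · exact ⟨mb ^ 2 * ma, by
      change ma * _ = _
      rw [(commute_mb_sq ma).eq, ← mul_assoc, ← sq, mc_sq]⟩
  · exact ⟨ma ^ 2 * mb, by
      change mb * _ = _
      rw [(commute_ma_sq mb).eq, ← mul_assoc, ← sq, mc_sq, (commute_ma_sq _).eq]⟩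
  · exact ⟨mc, (sq mc).symm⟩

def wordProd (w : List (Fin 3)) : M := (w.map (of mrels)).prod

def nf (i k : ℕ) (w : List (Fin 3)) : M := (ma ^ 2) ^ i * ((mb ^ 2) ^ k * wordProd w)

lemma of_mul_nf (x : Fin 3) (i k : ℕ) (w : List (Fin 3)) :
    of mrels x * nf i k w = nf i k (x :: w) := by
  rw [nf, nf, ((commute_ma_sq _).pow_left i).symm.left_comm,
    ((commute_mb_sq _).pow_left k).symm.left_comm]
  simp [wordProd]

lemma ma_sq_mul_nf (i k : ℕ) (w : List (Fin 3)) : ma ^ 2 * nf i k w = nf (i + 1) k w := by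
  rw [nf, nf, ← mul_assoc, ← pow_succ']

lemma mb_sq_mul_nf (i k : ℕ) (w : List (Fin 3)) : mb ^ 2 * nf i k w = nf i (k + 1) w := by
  rw [nf, nf, (commute_mb_sq ((ma ^ 2) ^ i)).left_comm, ← mul_assoc (mb ^ 2), ← pow_succ']

lemma mc_sq_mul_nf (i k : ℕ) (w : List (Fin 3)) :
    mc ^ 2 * nf i k w = nf (i + 1) (k + 1) w := by
  rw [mc_sq, mul_assoc, mb_sq_mul_nf, ma_sq_mul_nf]

lemma mc_sq_pow_mul_nf (d i k : ℕ) (w : List (Fin 3)) :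
    (mc ^ 2) ^ d * nf i k w = nf (i + d) (k + d) w := by
  induction d with
  | zero => simp
  | succ d ih => rw [pow_succ', mul_assoc, ih, mc_sq_mul_nf]; rfl

lemma exists_of_mul_nf_eq_nf (x : Fin 3) (i k : ℕ) {w : List (Fin 3)}
    (hw : w.IsChain (· ≠ ·)) :
    ∃ i' k' w', w'.IsChain (· ≠ ·) ∧ of mrels x * nf i k w = nf i' k' w' := by
  rcases w with _ | ⟨y, t⟩
  · exact ⟨i, k, [x], List.isChain_singleton x, of_mul_nf x i k []⟩
  by_cases hyx : y = x
  · subst hyx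
    rw [← of_mul_nf, ← mul_assoc, ← sq]
    fin_cases y
    · exact ⟨i + 1, k, t, hw.tail, ma_sq_mul_nf i k t⟩
    · exact ⟨i, k + 1, t, hw.tail, mb_sq_mul_nf i k t⟩
    · exact ⟨i + 1, k + 1, t, hw.tail, mc_sq_mul_nf i k t⟩
  · exact ⟨i, k, x :: y :: t, List.isChain_cons_cons.2 ⟨Ne.symm hyx, hw⟩, of_mul_nf x i k _⟩

lemma exists_nf (m : M) : ∃ i k w, w.IsChain (· ≠ ·) ∧ m = nf i k w := by
  induction m using PresentedMonoid.inductionOn with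
  | h a =>
    induction a using FreeMonoid.inductionOn' with
    | one => exact ⟨0, 0, [], List.isChain_nil, by simp [nf, wordProd]⟩
    | of_mul x xs ih =>
      obtain ⟨i, k, w, hw, hxs⟩ := ih
      rw [map_mul, hxs]
      exact exists_of_mul_nf_eq_nf x i k hw


/-- `a², b², c²` will act as translations by these vectors, so that `c² = a²b²` holds. -/
def weight : Fin 3 → ℤ × ℤ := ![(1, 0), (0, 1), (1, 1)]

abbrev genPerm (x : Fin 3) : Equiv.Perm ((ℤ × ℤ) × RedWord (Fin 3)) := letterPerm weight x

lemma genPerm_sq (x : Fin 3) : genPerm x ^ 2 = shift (ofAdd (weight x)) := by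
  rw [sq, letterPerm_mul_self]

lemma genPerm_sq_mul_genPerm (x y : Fin 3) :
    genPerm x ^ 2 * genPerm y = genPerm y * genPerm x ^ 2 := by
  rw [genPerm_sq]
  exact commute_shift_letterPerm weight y _

lemma genPerm_sq_mul_genPerm_sq : genPerm 0 ^ 2 * genPerm 1 ^ 2 = genPerm 2 ^ 2 := by
  rw [genPerm_sq, genPerm_sq, genPerm_sq, ← map_mul]
  rfl

def actM : M →* Equiv.Perm ((ℤ × ℤ) × RedWord (Fin 3)) :=
  PresentedMonoid.lift genPerm fun a b h => by
    cases h <;> simp only [map_mul, FreeMonoid.lift_eval_of, ← sq]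
    exacts [genPerm_sq_mul_genPerm 0 1, genPerm_sq_mul_genPerm 1 0, genPerm_sq_mul_genPerm 0 2,
      genPerm_sq_mul_genPerm 1 2, genPerm_sq_mul_genPerm_sq]

def actG : G →* Equiv.Perm ((ℤ × ℤ) × RedWord (Fin 3)) :=
  PresentedGroup.toGroup (f := genPerm) fun r hr => by
    rcases hr with rfl | rfl | rfl | rfl | rfl <;>
      simp only [map_mul, map_inv, map_pow, FreeGroup.lift_apply_of, mul_inv_eq_one]
    exacts [genPerm_sq_mul_genPerm 0 1, genPerm_sq_mul_genPerm 1 0, genPerm_sq_mul_genPerm 0 2,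
      genPerm_sq_mul_genPerm 1 2, genPerm_sq_mul_genPerm_sq]

def basePt : (ℤ × ℤ) × RedWord (Fin 3) := (0, ⟨[], List.isChain_nil⟩)

lemma actM_wordProd {w : List (Fin 3)} (hw : w.IsChain (· ≠ ·)) :
    actM (wordProd w) basePt = (0, ⟨w, hw⟩) := by
  induction w with
  | nil => rfl
  | cons x t ih =>
    rw [wordProd, List.map_cons, List.prod_cons, map_mul, Equiv.Perm.mul_apply]
    exact (congrArg (genPerm x) (ih hw.tail)).trans (letterPerm_apply_of_isChain_cons _ _ _ _ hw)

lemma actM_nf (i k : ℕ) {w : List (Fin 3)} (hw : w.IsChain (· ≠ ·)) :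
    actM (nf i k w) basePt = (((i : ℤ), (k : ℤ)), ⟨w, hw⟩) := by
  have hsq (x : Fin 3) : actM (of mrels x) ^ 2 = shift (ofAdd (weight x)) := genPerm_sq x
  rw [nf, map_mul, map_mul, Equiv.Perm.mul_apply, Equiv.Perm.mul_apply, actM_wordProd hw,
    map_pow, map_pow, map_pow, map_pow, ma, mb, hsq, hsq,
    shift_pow_apply, shift_pow_apply]
  simp [weight]

lemma eq_of_nf_eq {i k i' k' : ℕ} {w w' : List (Fin 3)} (hw : w.IsChain (· ≠ ·))
    (hw' : w'.IsChain (· ≠ ·)) (h : nf i k w = nf i' k' w') : i = i' ∧ k = k' ∧ w = w' := by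
  have := congrArg (actM · basePt) h
  simp only [actM_nf _ _ hw, actM_nf _ _ hw', Prod.mk.injEq, Subtype.mk.injEq] at this
  obtain ⟨⟨hi, hk⟩, rfl⟩ := this
  exact ⟨by omega, by omega, rfl⟩

lemma mc_sq_dvd_nf_iff {i k : ℕ} {w : List (Fin 3)} (hw : w.IsChain (· ≠ ·)) :
    mc ^ 2 ∣ nf i k w ↔ 0 < i ∧ 0 < k := by
  constructor
  · rintro ⟨m, hm⟩
    obtain ⟨i', k', w', hw', rfl⟩ := exists_nf m
    rw [mc_sq_mul_nf] at hm
    have := eq_of_nf_eq hw hw' hm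
    omega
  · rintro ⟨hi, hk⟩
    obtain ⟨i, rfl⟩ := Nat.exists_eq_add_one_of_ne_zero hi.ne'
    obtain ⟨k, rfl⟩ := Nat.exists_eq_add_one_of_ne_zero hk.ne'
    exact ⟨nf i k w, (mc_sq_mul_nf i k w).symm⟩

lemma actG_gc_zpow (n : ℤ) : actG (gc ^ (2 * n)) = shift (ofAdd (n, n)) := by
  have hgc : actG gc ^ 2 = shift (ofAdd (weight 2)) := genPerm_sq 2
  rw [zpow_mul, map_zpow, zpow_ofNat, map_pow, hgc, ← map_zpow, ← ofAdd_zsmul]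
  simp [weight]

section Embedding

variable (ι : M →* G) (hι : ∀ x, ι (of mrels x) = PresentedGroup.of x)
include hι

lemma actG_comp_eq_actM : actG.comp ι = actM :=
  PresentedMonoid.ext _ fun x => by
    rw [MonoidHom.comp_apply, hι]
    exact PresentedGroup.toGroup.of _

lemma map_mc : ι mc = gc := hι 2

lemma commute_gc_sq (m : M) : Commute (gc ^ 2) (ι m) := by
  rw [← map_mc ι hι, ← map_pow]
  exact (commute_mc_sq m).map ι

lemma actG_gc_zpow_mul_nf (n : ℤ) (i k : ℕ) {w : List (Fin 3)} (hw : w.IsChain (· ≠ ·)) :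
    actG (gc ^ (2 * n) * ι (nf i k w)) basePt = ((i + n, k + n), ⟨w, hw⟩) := by
  rw [map_mul, Equiv.Perm.mul_apply, ← MonoidHom.comp_apply, actG_comp_eq_actM ι hι, actM_nf i k hw,
    actG_gc_zpow]
  rfl

lemma gc_zpow_mul_nf_add_add (t : ℤ) (d i k : ℕ) (w : List (Fin 3)) :
    gc ^ (2 * t) * ι (nf (i + d) (k + d) w) = gc ^ (2 * (t + d)) * ι (nf i k w) := by
  rw [← mc_sq_pow_mul_nf, map_mul, map_pow, map_pow, map_mc ι hι, ← mul_assoc, mul_add, zpow_add,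
    zpow_mul gc 2 (d : ℤ), zpow_ofNat, zpow_natCast]

lemma exists_eq_gc_zpow_mul (g : G) : ∃ (t : ℤ) (m : M), g = gc ^ (2 * t) * ι m := by
  have hg : g ∈ Subgroup.closure (Set.range PresentedGroup.of) := by
    rw [PresentedGroup.closure_range_of]
    exact Subgroup.mem_top g
  induction hg using Subgroup.closure_induction'' with
  | mem _ hx =>
    obtain ⟨x, rfl⟩ := hx
    exact ⟨0, of mrels x, by rw [hι, mul_zero, zpow_zero, one_mul]⟩
  | inv_mem _ hx =>
    obtain ⟨x, rfl⟩ := hx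
    obtain ⟨m, hm⟩ := exists_of_mul_eq_mc_sq x
    refine ⟨-1, m, inv_eq_of_mul_eq_one_right ?_⟩
    rw [← hι, mul_neg, mul_one, zpow_neg, zpow_ofNat,
      (commute_gc_sq ι hι _).inv_left.symm.left_comm, ← map_mul, hm, map_pow, map_mc ι hι,
      inv_mul_cancel]
  | one => exact ⟨0, 1, by simp⟩
  | mul _ _ _ _ hx hy =>
    obtain ⟨t, m, rfl⟩ := hx
    obtain ⟨s, n, rfl⟩ := hy
    have hcomm : Commute (gc ^ (2 * s)) (ι m) := by
      rw [zpow_mul, zpow_ofNat]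
      exact (commute_gc_sq ι hι m).zpow_left s
    refine ⟨t + s, m * n, ?_⟩
    rw [map_mul, mul_add, zpow_add, mul_assoc, hcomm.symm.left_comm, mul_assoc]

lemma eq_of_gc_zpow_mul_nf_eq {n n' : ℤ} {i k i' k' : ℕ} {w w' : List (Fin 3)}
    (hw : w.IsChain (· ≠ ·)) (hw' : w'.IsChain (· ≠ ·)) (hik : i = 0 ∨ k = 0)
    (hik' : i' = 0 ∨ k' = 0) (h : gc ^ (2 * n) * ι (nf i k w) = gc ^ (2 * n') * ι (nf i' k' w')) :
    n = n' ∧ i = i' ∧ k = k' ∧ w = w' := by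
  have horb := congrArg (actG · basePt) h
  simp only [actG_gc_zpow_mul_nf ι hι _ _ _ hw, actG_gc_zpow_mul_nf ι hι _ _ _ hw', Prod.mk.injEq,
    Subtype.mk.injEq] at horb
  obtain ⟨⟨hi, hk⟩, rfl⟩ := horb
  exact ⟨by omega, by omega, by omega, rfl⟩

end Embedding

end Braid

open Braid

theorem stmt_19 (ι : M →* G) (hιa : ι ma = ga) (hιb : ι mb = gb) (hιc : ι mc = gc) (g : G) :
    ∃! x : ℤ × M, (¬ ∃ m' : M, x.2 = mc ^ 2 * m') ∧ g = gc ^ (-(2 * x.1)) * ι x.2 := by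
  have hι : ∀ x, ι (PresentedMonoid.of mrels x) = PresentedGroup.of x := by
    intro x
    fin_cases x
    exacts [hιa, hιb, hιc]
  obtain ⟨t, m, rfl⟩ := exists_eq_gc_zpow_mul ι hι g
  obtain ⟨i₀, k₀, w, hw, rfl⟩ := exists_nf m
  obtain ⟨d, i, k, rfl, rfl, hik⟩ : ∃ d i k, i₀ = i + d ∧ k₀ = k + d ∧ (i = 0 ∨ k = 0) :=
    ⟨min i₀ k₀, i₀ - min i₀ k₀, k₀ - min i₀ k₀, by omega⟩
  rw [gc_zpow_mul_nf_add_add ι hι]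
  refine ⟨(-(t + d), nf i k w), ⟨(mc_sq_dvd_nf_iff hw).not.2 (by omega), ?_⟩, ?_⟩
  · rw [mul_neg, neg_neg]
  · rintro ⟨j, m⟩ ⟨hm, heq⟩
    obtain ⟨i', k', w', hw', rfl⟩ := exists_nf m
    have hik' := (mc_sq_dvd_nf_iff hw').not.1 hm
    rw [← mul_neg] at heq
    obtain ⟨hj, rfl, rfl, rfl⟩ := eq_of_gc_zpow_mul_nf_eq ι hι hw hw' hik (by omega) heq
    exact Prod.ext (by omega) rfl
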